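/- Let G be a multigraph and let M and M' be two vertex-disjoint matchings of G such that every edge of M' is fully G-saturated and M' is maximal subject to this property (no fully G-saturated edge vertex-disjoint from M∪M' can be added to M'). Then χ'(G − (M ∪ M')) ≤ Δ(G) + μ(G) − 1. -/

import Mathlib

/-- A finite multigraph: finite vertex and edge types, each edge has an unordered pair of
endvertices, and there are no loops. -/
structure Multigraph where
  V : Type
  E : Type
  [fintypeV : Fintype V]
  [fintypeE : Fintype E]
  ends : E → Sym2 V
  loopless : ∀ e, ¬ (ends e).IsDiag

attribute [instance] Multigraph.fintypeV Multigraph.fintypeE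

namespace Multigraph

section Basic

variable (G : Multigraph)

/-- The degree of a vertex: the number of edges incident with it. -/
noncomputable def degree (v : G.V) : ℕ := {e : G.E | v ∈ G.ends e}.ncard

/-- The maximum degree Δ(G). -/
noncomputable def maxDegree : ℕ := sSup (Set.range G.degree)

/-- The number of edges joining `x` and `y` (the multiplicity e_G(x,y)). -/
noncomputable def mult (x y : G.V) : ℕ := {e : G.E | G.ends e = s(x, y)}.ncard

/-- The maximum multiplicity μ(G). -/
noncomputable def maxMult : ℕ := sSup {m : ℕ | ∃ x y : G.V, G.mult x y = m}

/-- `c` is a proper edge coloring, with palette `{1,…,k}`, of the edges in `D`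
(edges sharing an endvertex get distinct colors). -/
def IsProperColoringOn (k : ℕ) (D : Set G.E) (c : G.E → ℕ) : Prop :=
  (∀ e ∈ D, c e ∈ Set.Icc 1 k) ∧
  ∀ e ∈ D, ∀ f ∈ D, e ≠ f → (∃ v, v ∈ G.ends e ∧ v ∈ G.ends f) → c e ≠ c f

/-- A proper `k`-edge-coloring of all of `G`. -/
def IsProperColoring (k : ℕ) (c : G.E → ℕ) : Prop := G.IsProperColoringOn k Set.univ c

/-- The chromatic index of the subgraph of `G` consisting of the edges in `D`
(vertices are irrelevant for edge colorings). -/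
noncomputable def chromIndexOn (D : Set G.E) : ℕ := sInf {k | ∃ c, G.IsProperColoringOn k D c}

/-- The chromatic index χ'(G). -/
noncomputable def chromIndex : ℕ := G.chromIndexOn Set.univ

/-- The set of colors of the palette `{1,…,k}` missing at `v`, where only the edges in `D`
are regarded as colored. -/
def missingOn (k : ℕ) (D : Set G.E) (c : G.E → ℕ) (v : G.V) : Set ℕ :=
  {i | i ∈ Set.Icc 1 k ∧ ∀ e ∈ D, v ∈ G.ends e → c e ≠ i}

/-- `X` is elementary: missing-color sets of distinct vertices of `X` are disjoint. -/
def IsElementaryOn (k : ℕ) (D : Set G.E) (c : G.E → ℕ) (X : Set G.V) : Prop :=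
  ∀ u ∈ X, ∀ v ∈ X, u ≠ v → G.missingOn k D c u ∩ G.missingOn k D c v = ∅

/-- The boundary ∂_G(X): edges with an endvertex in `X` and an endvertex outside `X`. -/
def boundary (X : Set G.V) : Set G.E :=
  {e | (∃ v ∈ G.ends e, v ∈ X) ∧ (∃ v ∈ G.ends e, v ∉ X)}

/-- `X` is strongly closed (w.r.t. the coloring `c` of the edges in `D`): every color on a
boundary edge of `X` is present at every vertex of `X`, and the colors on the boundary edges
are pairwise distinct. -/
def IsStronglyClosedOn (D : Set G.E) (c : G.E → ℕ) (X : Set G.V) : Prop :=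
  (∀ e ∈ G.boundary X ∩ D, ∀ v ∈ X, ∃ f ∈ D, v ∈ G.ends f ∧ c f = c e) ∧
  ∀ e ∈ G.boundary X ∩ D, ∀ f ∈ G.boundary X ∩ D, e ≠ f → c e ≠ c f

end Basic

/-- A subgraph of `G`: a set of vertices together with a set of edges all of whose
endvertices belong to the vertex set. -/
structure Subgraph (G : Multigraph) where
  verts : Set G.V
  edges : Set G.E
  support : ∀ e ∈ edges, ∀ v, v ∈ G.ends e → v ∈ verts

section Sub

variable (G : Multigraph)

/-- The whole graph, as a subgraph of itself. -/
def top : G.Subgraph := ⟨Set.univ, Set.univ, fun _ _ _ _ => Set.mem_univ _⟩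

/-- `H` is a `k`-dense subgraph: it has an odd number of vertices and
`|E(H)| = (|V(H)|-1)·k/2`. -/
def IsDense (k : ℕ) (H : G.Subgraph) : Prop :=
  Odd H.verts.ncard ∧ 2 * H.edges.ncard = (H.verts.ncard - 1) * k

/-- `H` is a `k`-dense subgraph of `G - F` (the graph obtained by deleting the edges of `F`). -/
def IsDenseIn (F : Set G.E) (k : ℕ) (H : G.Subgraph) : Prop :=
  H.edges ∩ F = ∅ ∧ G.IsDense k H

/-- `H` is a maximal `k`-dense subgraph of `G - F`. -/
def IsMaximalDenseIn (F : Set G.E) (k : ℕ) (H : G.Subgraph) : Prop :=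
  G.IsDenseIn F k H ∧
  ∀ H' : G.Subgraph, G.IsDenseIn F k H' → H.verts ⊆ H'.verts → H.edges ⊆ H'.edges →
    H.verts = H'.verts ∧ H.edges = H'.edges

/-- The density Γ(H) of a subgraph `H` of `G`:
`max { 2|E(H')|/(|V(H')|-1) : H' ⊆ H, |V(H')| ≥ 3 odd }` (and `0` if there is no such `H'`,
since in `ℝ` the supremum of the empty set is `0`). -/
noncomputable def densityOf (H : G.Subgraph) : ℝ :=
  sSup {x : ℝ | ∃ H' : G.Subgraph, H'.verts ⊆ H.verts ∧ H'.edges ⊆ H.edges ∧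
    3 ≤ H'.verts.ncard ∧ Odd H'.verts.ncard ∧
    x = 2 * (H'.edges.ncard : ℝ) / ((H'.verts.ncard : ℝ) - 1)}

/-- The density Γ(G). -/
noncomputable def density : ℝ := G.densityOf G.top

/-- `e` is a `k`-critical edge of `G`: `χ'(G-e) = k < χ'(G) = k+1`. -/
def IsCriticalEdge (k : ℕ) (e : G.E) : Prop :=
  G.chromIndexOn {e}ᶜ = k ∧ G.chromIndex = k + 1

/-- Degree of `v` in the subgraph consisting of the edges in `D`. -/
noncomputable def degreeOn (D : Set G.E) (v : G.V) : ℕ := {e : G.E | e ∈ D ∧ v ∈ G.ends e}.ncard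

/-- Maximum degree of the subgraph consisting of the edges in `D`. -/
noncomputable def maxDegreeOn (D : Set G.E) : ℕ := sSup (Set.range (G.degreeOn D))

/-- Multiplicity of the pair `x,y` in the subgraph consisting of the edges in `D`. -/
noncomputable def multOn (D : Set G.E) (x y : G.V) : ℕ :=
  {e : G.E | e ∈ D ∧ G.ends e = s(x, y)}.ncard

/-- Maximum multiplicity of the subgraph consisting of the edges in `D`. -/
noncomputable def maxMultOn (D : Set G.E) : ℕ := sSup {m : ℕ | ∃ x y : G.V, G.multOn D x y = m}

/-- The simple graph underlying the subgraph of `G` with edge set `D`. -/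
def simpleOn (D : Set G.E) : SimpleGraph G.V where
  Adj a b := a ≠ b ∧ ∃ e ∈ D, G.ends e = s(a, b)
  symm := ⟨by
    rintro a b ⟨hab, e, he, hh⟩
    exact ⟨hab.symm, e, he, hh.trans Sym2.eq_swap⟩⟩
  loopless := ⟨by rintro a ⟨h, -⟩; exact h rfl⟩

/-- The diameter (in `ℕ∞`) of the subgraph with vertex set `S` and edge set `D`:
the greatest distance between a pair of its vertices. -/
noncomputable def diamOn (S : Set G.V) (D : Set G.E) : ℕ∞ :=
  sSup {d : ℕ∞ | ∃ u ∈ S, ∃ v ∈ S, (G.simpleOn D).edist u v = d}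

/-- The distance (in `ℕ∞`) between two edges of `G`: the length of a shortest path connecting
an endvertex of `e` and an endvertex of `f`. -/
noncomputable def edgeDist (e f : G.E) : ℕ∞ :=
  sInf {d : ℕ∞ | ∃ u v : G.V, u ∈ G.ends e ∧ v ∈ G.ends f ∧
    (G.simpleOn Set.univ).edist u v = d}

/-- A matching: a set of edges no two of which share an endvertex. -/
def IsMatching (M : Set G.E) : Prop :=
  ∀ e ∈ M, ∀ f ∈ M, e ≠ f → ∀ v : G.V, v ∈ G.ends e → v ∉ G.ends f

/-- An edge `e ∈ E_G(x,y)` is fully `G`-saturated if `d_G(x) = d_G(y) = Δ(G)` and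
`e_G(x,y) = μ(G)`. -/
def IsFullySaturated (e : G.E) : Prop :=
  ∃ x y : G.V, G.ends e = s(x, y) ∧ G.degree x = G.maxDegree ∧ G.degree y = G.maxDegree ∧
    G.mult x y = G.maxMult

/-- One step along a Kempe `(α,β)`-chain: an edge of `D` colored `α` or `β` joining the
two vertices. -/
def chainStep (D : Set G.E) (c : G.E → ℕ) (α β : ℕ) (a b : G.V) : Prop :=
  ∃ e ∈ D, G.ends e = s(a, b) ∧ (c e = α ∨ c e = β)

/-- `u` and `v` lie on the same `(α,β)`-chain, i.e. `P_u(α,β) = P_v(α,β)`. -/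
def sameChain (D : Set G.E) (c : G.E → ℕ) (α β : ℕ) (u v : G.V) : Prop :=
  Relation.ReflTransGen (G.chainStep D c α β) u v

end Sub

/-- The Goldberg–Seymour theorem (proved by Chen, Jing and Zang), as a hypothesis:
every multigraph `G'` with `χ'(G') ≥ Δ(G')+2` satisfies `χ'(G') = ⌈Γ(G')⌉`. -/
def GoldbergSeymour : Prop :=
  ∀ G' : Multigraph, G'.maxDegree + 2 ≤ G'.chromIndex → (G'.chromIndex : ℤ) = ⌈G'.density⌉

/-- A (general) multi-fan at `x` with respect to the edge `e₀ ∈ E_G(x,y₀)` and the coloring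
`c` of the edges in `D` with palette `{1,…,k}`: a sequence `(x, e₀, y₀, e₁, y₁, …, e_p, y_p)`
of vertices and pairwise distinct edges with `e_i ∈ E_G(x, y_i)` and, for `i ≥ 1`,
`c(e_i)` missing at `y_j` for some `j < i`. -/
structure MultiFan (G : Multigraph) (k : ℕ) (D : Set G.E) (c : G.E → ℕ)
    (x : G.V) (e₀ : G.E) (y₀ : G.V) where
  p : ℕ
  edge : Fin (p + 1) → G.E
  vx : Fin (p + 1) → G.V
  edge_zero : edge 0 = e₀
  vx_zero : vx 0 = y₀
  ends_eq : ∀ i, G.ends (edge i) = s(x, vx i)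
  edge_inj : Function.Injective edge
  fan_cond : ∀ i : Fin (p + 1), i ≠ 0 →
    ∃ j : Fin (p + 1), j < i ∧ c (edge i) ∈ G.missingOn k D c (vx j)

namespace MultiFan

variable {G : Multigraph} {k : ℕ} {D : Set G.E} {c : G.E → ℕ} {x : G.V} {e₀ : G.E} {y₀ : G.V}

/-- The vertex set `V(F)` of a multi-fan. -/
def verts (F : MultiFan G k D c x e₀ y₀) : Set G.V := insert x (Set.range F.vx)

/-- `F` is a subsequence of `F'`. -/
def Subseq (F F' : MultiFan G k D c x e₀ y₀) : Prop :=
  ∃ ι : Fin (F.p + 1) → Fin (F'.p + 1), StrictMono ι ∧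
    ∀ i, F'.edge (ι i) = F.edge i ∧ F'.vx (ι i) = F.vx i

/-- `F` is a maximal multi-fan: no multi-fan contains it as a proper subsequence. -/
def IsMaximal (F : MultiFan G k D c x e₀ y₀) : Prop :=
  ∀ F' : MultiFan G k D c x e₀ y₀, F.Subseq F' → F'.p = F.p

/-- `F` contains no `i`-edge. -/
def NoColor (F : MultiFan G k D c x e₀ y₀) (i : ℕ) : Prop :=
  ∀ j, F.edge j ∈ D → c (F.edge j) ≠ i

/-- `F` is a multi-fan without `i`-edges that is maximal among such. -/
def IsMaximalWithout (F : MultiFan G k D c x e₀ y₀) (i : ℕ) : Prop :=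
  F.NoColor i ∧
  ∀ F' : MultiFan G k D c x e₀ y₀, F'.NoColor i → F.Subseq F' → F'.p = F.p

/-- `e_F(x,z)`: the number of edges of the multi-fan `F` joining `x` and `z`. -/
noncomputable def multAt (F : MultiFan G k D c x e₀ y₀) (z : G.V) : ℕ :=
  Nat.card {j : Fin (F.p + 1) // F.vx j = z}

end MultiFan

end Multigraph

/-!
Let `k = Δ + μ - 1` and let `T` be a minimal set of edges of `G - (M ∪ M')` that is not
`k`-edge-colorable. Vizing's fan argument, with one Kempe-chain swap, shows that for every edge
`xy ∈ T` some vertex `z` has `d_T(z) + e_T(x,z) ≥ k + 1 = Δ + μ`; hence `d_T(z) = d_G(z) = Δ` and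
`e_T(x,z) = e_G(x,z) = μ`. Applying this to an edge at `x` and then to an edge `xz₁` produces a
fully saturated edge `z₁z₂` all of whose `G`-edges at `z₁` and `z₂` lie in `T`. By maximality some
edge of `M ∪ M'` meets `z₁` or `z₂`, so it lies in `T`, which avoids `M ∪ M'`.
-/

theorem Set.sdiff_singleton_subset_insert_sdiff {α : Type*} (s : Set α) (a b : α) :
    s \ {b} ⊆ insert a ((s \ {a}) \ {b}) := fun f hf => by
  by_cases hfa : f = a <;> simp_all

namespace Multigraph

open scoped Classical

variable {G : Multigraph}

section Basic

theorem exists_ends_eq (e : G.E) : ∃ a b, a ≠ b ∧ G.ends e = s(a, b) := by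
  induction h : G.ends e using Sym2.ind with
  | _ a b => exact ⟨a, b, fun hab => G.loopless e (by rw [h, hab]; rfl), rfl⟩

theorem exists_ends_eq_of_mem {e : G.E} {x : G.V} (hx : x ∈ G.ends e) :
    ∃ w, w ≠ x ∧ G.ends e = s(x, w) := by
  obtain ⟨w, hw⟩ := Sym2.mem_iff_exists.mp hx
  exact ⟨w, fun hwx => G.loopless e (by rw [hw, hwx]; rfl), hw⟩

theorem degree_le_maxDegree (v : G.V) : G.degree v ≤ G.maxDegree :=
  le_csSup (Set.finite_range _).bddAbove ⟨v, rfl⟩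

theorem mult_le_maxMult (u v : G.V) : G.mult u v ≤ G.maxMult := by
  refine le_csSup ?_ ⟨u, v, rfl⟩
  refine (Set.finite_range fun p : G.V × G.V => G.mult p.1 p.2).bddAbove.mono ?_
  rintro _ ⟨a, b, rfl⟩
  exact ⟨(a, b), rfl⟩

theorem maxMult_pos (e : G.E) : 0 < G.maxMult := by
  obtain ⟨a, b, -, hab⟩ := exists_ends_eq e
  exact ((Set.ncard_pos (Set.toFinite _)).2 ⟨e, hab⟩).trans_le (mult_le_maxMult a b)

theorem degreeOn_le_degree (D : Set G.E) (v : G.V) : G.degreeOn D v ≤ G.degree v :=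
  Set.ncard_le_ncard fun _ he => he.2

theorem multOn_le_mult (D : Set G.E) (u v : G.V) : G.multOn D u v ≤ G.mult u v :=
  Set.ncard_le_ncard fun _ he => he.2

theorem degreeOn_mono {D D' : Set G.E} (h : D ⊆ D') (v : G.V) :
    G.degreeOn D v ≤ G.degreeOn D' v :=
  Set.ncard_le_ncard fun _ he => ⟨h he.1, he.2⟩

theorem degreeOn_sdiff_lt {T : Set G.E} {e : G.E} {v : G.V} (he : e ∈ T) (hv : v ∈ G.ends e) :
    G.degreeOn (T \ {e}) v < G.degreeOn T v :=
  Set.ncard_lt_ncard ⟨fun _ hf => ⟨hf.1.1, hf.2⟩, fun h => (h ⟨he, hv⟩).1.2 rfl⟩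

theorem mem_of_degreeOn_eq_degree {T : Set G.E} {v : G.V} (h : G.degreeOn T v = G.degree v)
    {f : G.E} (hf : v ∈ G.ends f) : f ∈ T := by
  have : {f | f ∈ T ∧ v ∈ G.ends f} = {f | v ∈ G.ends f} :=
    Set.eq_of_subset_of_ncard_le (fun _ hf => hf.2) h.ge
  exact (this.symm ▸ hf : f ∈ {f | f ∈ T ∧ v ∈ G.ends f}).1

theorem sum_degreeOn (C : Set G.E) : ∑ v, G.degreeOn C v = 2 * C.ncard := by
  have hdeg : ∀ v, G.degreeOn C v =
      (C.toFinset.bipartiteAbove (fun v e => v ∈ G.ends e) v).card := by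
    intro v
    rw [degreeOn, ← Set.ncard_coe_finset]
    congr 1
    ext e
    simp [Finset.bipartiteAbove]
  have hends : ∀ e ∈ C.toFinset,
      ((Finset.univ : Finset G.V).bipartiteBelow (fun v e => v ∈ G.ends e) e).card = 2 := by
    intro e _
    obtain ⟨a, b, hab, he⟩ := exists_ends_eq e
    rw [show (Finset.univ : Finset G.V).bipartiteBelow (fun v e => v ∈ G.ends e) e = {a, b} by
      ext v; simp [Finset.bipartiteBelow, he]]
    exact Finset.card_pair hab
  simp_rw [hdeg]
  rw [Finset.sum_card_bipartiteAbove_eq_sum_card_bipartiteBelow, Finset.sum_congr rfl hends,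
    Finset.sum_const, smul_eq_mul, Set.ncard_eq_toFinset_card', mul_comm]

end Basic

section Coloring

variable {k : ℕ} {D D' : Set G.E} {c : G.E → ℕ} {e : G.E} {v : G.V}

theorem IsProperColoringOn.mono (hc : G.IsProperColoringOn k D c) (h : D' ⊆ D) :
    G.IsProperColoringOn k D' c :=
  ⟨fun e he => hc.1 e (h he), fun e he f hf => hc.2 e (h he) f (h hf)⟩

theorem IsProperColoringOn.color_ne (hc : G.IsProperColoringOn k D c) {f : G.E} (he : e ∈ D)
    (hf : f ∈ D) (hef : e ≠ f) (hve : v ∈ G.ends e) (hvf : v ∈ G.ends f) : c e ≠ c f :=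
  hc.2 e he f hf hef ⟨v, hve, hvf⟩

theorem chromIndexOn_le_of_isProperColoringOn (hc : G.IsProperColoringOn k D c) :
    G.chromIndexOn D ≤ k :=
  Nat.sInf_le ⟨c, hc⟩

theorem missingOn_anti (h : D' ⊆ D) : G.missingOn k D c v ⊆ G.missingOn k D' c v :=
  fun _ hγ => ⟨hγ.1, fun f hf => hγ.2 f (h hf)⟩

theorem exists_color_eq_of_notMem_missingOn {γ : ℕ} (hγ : γ ∈ Set.Icc 1 k)
    (h : γ ∉ G.missingOn k D c v) : ∃ f ∈ D, v ∈ G.ends f ∧ c f = γ := by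
  simpa [missingOn, hγ.1, hγ.2] using h

theorem IsProperColoringOn.mem_missingOn_sdiff (hc : G.IsProperColoringOn k D c) (he : e ∈ D)
    (hv : v ∈ G.ends e) : c e ∈ G.missingOn k (D \ {e}) c v :=
  ⟨hc.1 e he, fun f hf hvf => hc.2 f hf.1 e he hf.2 ⟨v, hvf, hv⟩⟩

theorem mem_missingOn_update {γ δ : ℕ} (hδ : δ ∈ G.missingOn k D c v)
    (hγ : v ∈ G.ends e → γ ≠ δ) : δ ∈ G.missingOn k (insert e D) (Function.update c e γ) v := by
  refine ⟨hδ.1, fun f hf hvf => ?_⟩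
  by_cases hfe : f = e
  · subst hfe; simpa using hγ hvf
  · rw [Function.update_of_ne hfe]
    exact hδ.2 f ((Set.mem_insert_iff.1 hf).resolve_left hfe) hvf

theorem mem_missingOn_sdiff_update {T : Set G.E} {a b : G.E} {γ δ : ℕ}
    (hδ : δ ∈ G.missingOn k (T \ {a}) c v) (hγ : v ∈ G.ends a → γ ≠ δ) :
    δ ∈ G.missingOn k (T \ {b}) (Function.update c a γ) v :=
  missingOn_anti (Set.sdiff_singleton_subset_insert_sdiff T a b)
    (mem_missingOn_update (missingOn_anti Set.sdiff_subset hδ) hγ)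

theorem IsProperColoringOn.insert_update {γ : ℕ} (hc : G.IsProperColoringOn k D c)
    (hγ : ∀ u ∈ G.ends e, γ ∈ G.missingOn k D c u) :
    G.IsProperColoringOn k (insert e D) (Function.update c e γ) := by
  obtain ⟨a, b, -, hab⟩ := exists_ends_eq e
  have hγk : γ ∈ Set.Icc 1 k := (hγ a (by simp [hab])).1
  have key : ∀ f ∈ insert e D, f ≠ e → (∃ u, u ∈ G.ends e ∧ u ∈ G.ends f) →
      γ ≠ Function.update c e γ f := by
    rintro f hf hfe ⟨u, hue, huf⟩
    rw [Function.update_of_ne hfe]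
    exact ((hγ u hue).2 f ((Set.mem_insert_iff.1 hf).resolve_left hfe) huf).symm
  refine ⟨fun f hf => ?_, fun f hf f' hf' hff' hshare => ?_⟩
  · by_cases hfe : f = e
    · subst hfe; simpa using hγk
    · rw [Function.update_of_ne hfe]; exact hc.1 f ((Set.mem_insert_iff.1 hf).resolve_left hfe)
  · by_cases hfe : f = e
    · subst hfe; simpa using key f' hf' (Ne.symm hff') hshare
    by_cases hf'e : f' = e
    · subst hf'e
      obtain ⟨u, hu, hu'⟩ := hshare
      simpa using (key f hf hfe ⟨u, hu', hu⟩).symm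
    rw [Function.update_of_ne hfe, Function.update_of_ne hf'e]
    exact hc.2 f ((Set.mem_insert_iff.1 hf).resolve_left hfe) f'
      ((Set.mem_insert_iff.1 hf').resolve_left hf'e) hff' hshare

theorem le_ncard_missingOn_add_degreeOn (c : G.E → ℕ) (v : G.V) :
    k ≤ (G.missingOn k D c v).ncard + G.degreeOn D v := by
  have hcover : Set.Icc 1 k ⊆ G.missingOn k D c v ∪ c '' {f | f ∈ D ∧ v ∈ G.ends f} := by
    intro γ hγ
    by_cases hm : γ ∈ G.missingOn k D c v
    · exact Or.inl hm
    · obtain ⟨f, hf, hvf, rfl⟩ := exists_color_eq_of_notMem_missingOn hγ hm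
      exact Or.inr ⟨f, ⟨hf, hvf⟩, rfl⟩
  have hfin : (G.missingOn k D c v).Finite := (Set.finite_Icc 1 k).subset fun _ h => h.1
  calc k = (Set.Icc 1 k).ncard := by rw [Set.ncard_Icc_nat]; omega
    _ ≤ (G.missingOn k D c v ∪ c '' {f | f ∈ D ∧ v ∈ G.ends f}).ncard :=
      Set.ncard_le_ncard hcover (hfin.union ((Set.toFinite _).image c))
    _ ≤ (G.missingOn k D c v).ncard + (c '' {f | f ∈ D ∧ v ∈ G.ends f}).ncard :=
      Set.ncard_union_le _ _
    _ ≤ (G.missingOn k D c v).ncard + G.degreeOn D v := by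
      gcongr; exact Set.ncard_image_le (Set.toFinite _)

theorem exists_mem_missingOn_of_degreeOn_lt (c : G.E → ℕ) (h : G.degreeOn D v < k) :
    ∃ γ, γ ∈ G.missingOn k D c v := by
  by_contra! hno
  have := le_ncard_missingOn_add_degreeOn (k := k) (D := D) c v
  rw [Set.eq_empty_of_forall_notMem hno, Set.ncard_empty] at this
  omega

theorem IsProperColoringOn.degreeOn_le_ncard {A : Set G.E} {S : Set ℕ}
    (hc : G.IsProperColoringOn k D c) (hA : A ⊆ D) (hS : ∀ f ∈ A, v ∈ G.ends f → c f ∈ S)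
    (hSfin : S.Finite) : G.degreeOn A v ≤ S.ncard := by
  have hinj : Set.InjOn c {f | f ∈ A ∧ v ∈ G.ends f} := fun f hf f' hf' hff' => by
    by_contra hne
    exact hc.2 f (hA hf.1) f' (hA hf'.1) hne ⟨v, hf.2, hf'.2⟩ hff'
  rw [degreeOn, ← hinj.ncard_image]
  exact Set.ncard_le_ncard (by rintro _ ⟨f, hf, rfl⟩; exact hS f hf.1 hf.2) hSfin

end Coloring

section Kempe

variable {k : ℕ} {D : Set G.E} {c : G.E → ℕ} {α β : ℕ} {K : Set G.V} {e : G.E} {v : G.V}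

variable (G) in
def kempeEdges (D : Set G.E) (c : G.E → ℕ) (α β : ℕ) : Set G.E :=
  {e | e ∈ D ∧ (c e = α ∨ c e = β)}

variable (G) in
/-- `K` is a union of `(α,β)`-chains. -/
def IsChainClosed (D : Set G.E) (c : G.E → ℕ) (α β : ℕ) (K : Set G.V) : Prop :=
  ∀ a b, G.chainStep D c α β a b → a ∈ K → b ∈ K

variable (G) in
noncomputable def swapOn (c : G.E → ℕ) (α β : ℕ) (K : Set G.V) : G.E → ℕ := fun e =>
  if ∃ v ∈ G.ends e, v ∈ K then Equiv.swap α β (c e) else c e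

theorem isChainClosed_sameChain (u : G.V) :
    G.IsChainClosed D c α β {v | G.sameChain D c α β u v} :=
  fun _ _ hab ha => Relation.ReflTransGen.tail ha hab

theorem degreeOn_kempeEdges_le_two (hc : G.IsProperColoringOn k D c) (v : G.V) :
    G.degreeOn (G.kempeEdges D c α β) v ≤ 2 :=
  (hc.degreeOn_le_ncard (fun _ hf => hf.1) (S := {α, β}) (fun _ hf _ => hf.2)
    (Set.toFinite _)).trans ((Set.ncard_insert_le α {β}).trans (by simp))

theorem degreeOn_kempeEdges_le_one (hc : G.IsProperColoringOn k D c)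
    (h : α ∈ G.missingOn k D c v ∨ β ∈ G.missingOn k D c v) :
    G.degreeOn (G.kempeEdges D c α β) v ≤ 1 := by
  rcases h with h | h
  · refine (hc.degreeOn_le_ncard (fun _ hf => hf.1) (S := {β}) ?_ (Set.toFinite _)).trans
      (Set.ncard_singleton β).le
    exact fun f hf hvf => hf.2.resolve_left (h.2 f hf.1 hvf)
  · refine (hc.degreeOn_le_ncard (fun _ hf => hf.1) (S := {α}) ?_ (Set.toFinite _)).trans
      (Set.ncard_singleton α).le
    exact fun f hf hvf => hf.2.resolve_right (h.2 f hf.1 hvf)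

theorem swapOn_apply_of_mem (hv : v ∈ G.ends e) (hvK : v ∈ K) :
    G.swapOn c α β K e = Equiv.swap α β (c e) :=
  if_pos ⟨v, hv, hvK⟩

theorem swapOn_apply_of_notMem (hK : G.IsChainClosed D c α β K) (he : e ∈ D)
    (hv : v ∈ G.ends e) (hvK : v ∉ K) : G.swapOn c α β K e = c e := by
  by_cases htouch : ∃ u ∈ G.ends e, u ∈ K
  · obtain ⟨u, hu, huK⟩ := htouch
    obtain ⟨w, -, hw⟩ := exists_ends_eq_of_mem hu
    have hvw : v = w := by
      rw [hw, Sym2.mem_iff] at hv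
      exact hv.resolve_left (by rintro rfl; exact hvK huK)
    subst hvw
    have hαβ : c e ≠ α ∧ c e ≠ β := by
      constructor <;> intro hce <;> exact hvK (hK u v ⟨e, he, hw, by tauto⟩ huK)
    rw [swapOn, if_pos ⟨u, hu, huK⟩, Equiv.swap_apply_of_ne_of_ne hαβ.1 hαβ.2]
  · exact if_neg htouch

theorem swap_mem_Icc {γ : ℕ} (hα : α ∈ Set.Icc 1 k) (hβ : β ∈ Set.Icc 1 k)
    (hγ : γ ∈ Set.Icc 1 k) : Equiv.swap α β γ ∈ Set.Icc 1 k := by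
  rw [Equiv.swap_apply_def]
  split_ifs <;> assumption

theorem IsProperColoringOn.swapOn (hc : G.IsProperColoringOn k D c)
    (hα : α ∈ Set.Icc 1 k) (hβ : β ∈ Set.Icc 1 k) (hK : G.IsChainClosed D c α β K) :
    G.IsProperColoringOn k D (G.swapOn c α β K) := by
  refine ⟨fun f hf => ?_, fun f hf f' hf' hff' ⟨u, hu, hu'⟩ => ?_⟩
  · unfold Multigraph.swapOn
    split_ifs
    exacts [swap_mem_Icc hα hβ (hc.1 f hf), hc.1 f hf]
  · by_cases huK : u ∈ K
    · rw [swapOn_apply_of_mem hu huK, swapOn_apply_of_mem hu' huK]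
      exact (Equiv.injective _).ne (hc.2 f hf f' hf' hff' ⟨u, hu, hu'⟩)
    · rw [swapOn_apply_of_notMem hK hf hu huK, swapOn_apply_of_notMem hK hf' hu' huK]
      exact hc.2 f hf f' hf' hff' ⟨u, hu, hu'⟩

theorem mem_missingOn_swapOn_iff_of_mem {δ : ℕ} (hα : α ∈ Set.Icc 1 k)
    (hβ : β ∈ Set.Icc 1 k) (hvK : v ∈ K) :
    δ ∈ G.missingOn k D (G.swapOn c α β K) v ↔ Equiv.swap α β δ ∈ G.missingOn k D c v := by
  have hIcc : δ ∈ Set.Icc 1 k ↔ Equiv.swap α β δ ∈ Set.Icc 1 k :=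
    ⟨swap_mem_Icc hα hβ, fun h => by simpa using swap_mem_Icc hα hβ h⟩
  simp only [missingOn, Set.mem_ofPred_eq, hIcc]
  refine and_congr_right fun _ => forall₂_congr fun f _ => imp_congr_right fun hvf => ?_
  rw [swapOn_apply_of_mem hvf hvK, Ne, Ne, Equiv.swap_apply_eq_iff]

theorem missingOn_swapOn_of_notMem (hK : G.IsChainClosed D c α β K) (hvK : v ∉ K) :
    G.missingOn k D (G.swapOn c α β K) v = G.missingOn k D c v := by
  ext δ
  simp only [missingOn, Set.mem_ofPred_eq]
  refine and_congr_right fun _ => forall₂_congr fun f hf => imp_congr_right fun hvf => ?_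
  rw [swapOn_apply_of_notMem hK hf hvf hvK]

theorem simpleOn_adj_of_ends_eq {A : Set G.E} {a b : G.V} (he : e ∈ A)
    (hab : G.ends e = s(a, b)) : (G.simpleOn A).Adj a b :=
  ⟨fun h => G.loopless e (by rw [hab, h]; rfl), e, he, hab⟩

theorem sameChain.reachable {u w : G.V} (h : G.sameChain D c α β u w) :
    (G.simpleOn (G.kempeEdges D c α β)).Reachable u w := by
  induction h with
  | refl => rfl
  | tail _ hstep ih =>
    obtain ⟨f, hf, hends, hcol⟩ := hstep
    exact ih.trans
      (simpleOn_adj_of_ends_eq (A := G.kempeEdges D c α β) ⟨hf, hcol⟩ hends).reachable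

end Kempe

section Leaves

variable {A : Set G.E}

theorem ncard_supp_le_ncard_add_one (K : (G.simpleOn A).ConnectedComponent) :
    K.supp.ncard ≤ {e | e ∈ A ∧ ∃ v ∈ G.ends e, v ∈ K.supp}.ncard + 1 := by
  have hconn := K.connected_toSimpleGraph.card_vert_le_card_edgeSet_add_one
  have himage : Sym2.map Subtype.val '' K.toSimpleGraph.edgeSet ⊆
      G.ends '' {e | e ∈ A ∧ ∃ v ∈ G.ends e, v ∈ K.supp} := by
    rintro _ ⟨z, hz, rfl⟩
    induction z using Sym2.ind with
    | _ u w =>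
      obtain ⟨-, e, he, hends⟩ := hz
      exact ⟨e, ⟨he, u, by simp [hends], u.2⟩, by simp [hends]⟩
  have hedges : Nat.card K.toSimpleGraph.edgeSet ≤
      {e | e ∈ A ∧ ∃ v ∈ G.ends e, v ∈ K.supp}.ncard := by
    rw [Nat.card_coe_set_eq, ← Set.ncard_image_of_injective _
      (Sym2.map.injective Subtype.val_injective)]
    exact (Set.ncard_le_ncard himage (Set.toFinite _)).trans
      (Set.ncard_image_le (Set.toFinite _))
  have hV : Nat.card K = K.supp.ncard := Nat.card_coe_set_eq K.supp
  omega

theorem degreeOn_eq_zero_of_notMem_supp (K : (G.simpleOn A).ConnectedComponent) {v : G.V}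
    (hv : v ∉ K.supp) : G.degreeOn {e | e ∈ A ∧ ∃ u ∈ G.ends e, u ∈ K.supp} v = 0 := by
  rw [degreeOn, Set.ncard_eq_zero]
  refine Set.eq_empty_of_forall_notMem fun e ⟨⟨he, u, hu, huK⟩, hve⟩ => hv ?_
  obtain ⟨w, -, hw⟩ := exists_ends_eq_of_mem hve
  rw [hw, Sym2.mem_iff] at hu
  rcases hu with rfl | rfl
  · exact huK
  · exact K.mem_supp_of_adj_mem_supp huK (simpleOn_adj_of_ends_eq he (hw.trans Sym2.eq_swap))

/-- A component of maximum degree at most two is a path or a cycle, so it has at most two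
vertices of degree at most one. Here this is read off from the handshake lemma and the bound
`|V| ≤ |E| + 1` for connected graphs. -/
theorem false_of_three_leaves (hdeg : ∀ v, G.degreeOn A v ≤ 2) {a b d : G.V}
    (hab : a ≠ b) (had : a ≠ d) (hbd : b ≠ d) (ha : G.degreeOn A a ≤ 1)
    (hb : G.degreeOn A b ≤ 1) (hd : G.degreeOn A d ≤ 1)
    (hrb : (G.simpleOn A).Reachable a b) (hrd : (G.simpleOn A).Reachable a d) : False := by
  set K := (G.simpleOn A).connectedComponentMk a
  set AK := {e | e ∈ A ∧ ∃ u ∈ G.ends e, u ∈ K.supp}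
  have hmem : ∀ v ∈ ({a, b, d} : Finset G.V), v ∈ K.supp := by
    simp only [Finset.mem_insert, Finset.mem_singleton]
    rintro v (rfl | rfl | rfl)
    exacts [rfl, (SimpleGraph.ConnectedComponent.eq.2 hrb).symm,
      (SimpleGraph.ConnectedComponent.eq.2 hrd).symm]
  have hbound : ∀ v, G.degreeOn AK v + (if v ∈ ({a, b, d} : Finset G.V) then 1 else 0) ≤
      if v ∈ K.supp then 2 else 0 := by
    intro v
    by_cases hv : v ∈ K.supp
    · have hle : G.degreeOn AK v ≤ G.degreeOn A v := degreeOn_mono (fun _ he => he.1) v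
      have := hdeg v
      simp only [Finset.mem_insert, Finset.mem_singleton, hv, if_true]
      split_ifs with h
      · rcases h with rfl | rfl | rfl <;> omega
      · omega
    · rw [degreeOn_eq_zero_of_notMem_supp K hv, if_neg (mt (hmem v) hv), if_neg hv]
  have hsum := Finset.sum_le_sum fun v (_ : v ∈ Finset.univ) => hbound v
  have hW : ∑ v, (if v ∈ K.supp then 2 else 0) = 2 * K.supp.ncard := by
    rw [Finset.sum_ite, Finset.sum_const_zero, add_zero, Finset.sum_const, smul_eq_mul,
      Set.ncard_eq_toFinset_card', Set.toFinset_card, mul_comm, Fintype.card_subtype]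
  rw [Finset.sum_add_distrib, sum_degreeOn, Finset.sum_boole, hW, Finset.filter_mem_eq_inter,
    Finset.univ_inter, Finset.card_insert_of_notMem (by simp [hab, had]),
    Finset.card_pair hbd] at hsum
  have hconn : K.supp.ncard ≤ AK.ncard + 1 := ncard_supp_le_ncard_add_one K
  omega

end Leaves

section VizingFan

variable (G) in
/-- `e 0` is the uncolored edge. This is the special case of `MultiFan` in which the color of
each edge is missing at the immediately preceding vertex. -/
structure IsVizingFan (k : ℕ) (T : Set G.E) (c : G.E → ℕ) (x : G.V) (e : ℕ → G.E)
    (y : ℕ → G.V) (p : ℕ) : Prop where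
  mem : ∀ i ≤ p, e i ∈ T
  ends_eq : ∀ i ≤ p, G.ends (e i) = s(x, y i)
  injOn : Set.InjOn e (Set.Iic p)
  missing : ∀ i < p, c (e (i + 1)) ∈ G.missingOn k (T \ {e 0}) c (y i)

namespace IsVizingFan

variable {k : ℕ} {T : Set G.E} {c : G.E → ℕ} {x : G.V}

section

variable {e : ℕ → G.E} {y : ℕ → G.V} {p : ℕ}

theorem left_mem (F : G.IsVizingFan k T c x e y p) {i : ℕ} (hi : i ≤ p) :
    x ∈ G.ends (e i) := by
  simp [F.ends_eq i hi]

theorem left_ne (F : G.IsVizingFan k T c x e y p) {i : ℕ} (hi : i ≤ p) : x ≠ y i := fun h =>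
  G.loopless (e i) (by rw [F.ends_eq i hi, ← h]; rfl)

theorem eq_iff (F : G.IsVizingFan k T c x e y p) {i j : ℕ} (hi : i ≤ p) (hj : j ≤ p) :
    e i = e j ↔ i = j :=
  F.injOn.eq_iff (Set.mem_Iic.2 hi) (Set.mem_Iic.2 hj)

theorem mem_sdiff (F : G.IsVizingFan k T c x e y p) {i : ℕ} (hi : i ≤ p) (hi0 : i ≠ 0) :
    e i ∈ T \ {e 0} :=
  ⟨F.mem i hi, fun h => hi0 ((F.eq_iff hi (Nat.zero_le p)).1 h)⟩

theorem mono (F : G.IsVizingFan k T c x e y p) {q : ℕ} (hq : q ≤ p) :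
    G.IsVizingFan k T c x e y q where
  mem i hi := F.mem i (hi.trans hq)
  ends_eq i hi := F.ends_eq i (hi.trans hq)
  injOn := F.injOn.mono (Set.Iic_subset_Iic.2 hq)
  missing i hi := F.missing i (hi.trans_le hq)

theorem succ_le_degreeOn (F : G.IsVizingFan k T c x e y p) : p + 1 ≤ G.degreeOn T x := by
  rw [← Set.ncard_Iic_nat p]
  exact Set.ncard_le_ncard_of_injOn e (fun i hi => ⟨F.mem i hi, F.left_mem hi⟩) F.injOn

theorem ncard_le_multOn (F : G.IsVizingFan k T c x e y p) (z : G.V) :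
    {i | i ≤ p ∧ y i = z}.ncard ≤ G.multOn T x z :=
  Set.ncard_le_ncard_of_injOn e (fun i hi => ⟨F.mem i hi.1, hi.2 ▸ F.ends_eq i hi.1⟩)
    (F.injOn.mono fun _ hi => hi.1)

theorem extend (F : G.IsVizingFan k T c x e y p) {g : G.E} {w : G.V} (hg : g ∈ T)
    (hends : G.ends g = s(x, w)) (hnew : ∀ i ≤ p, e i ≠ g)
    (hcol : c g ∈ G.missingOn k (T \ {e 0}) c (y p)) :
    G.IsVizingFan k T c x (Function.update e (p + 1) g) (Function.update y (p + 1) w)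
      (p + 1) where
  mem i hi := by
    rcases eq_or_ne i (p + 1) with rfl | hne
    · simpa using hg
    · rw [Function.update_of_ne hne]; exact F.mem i (by omega)
  ends_eq i hi := by
    rcases eq_or_ne i (p + 1) with rfl | hne
    · simpa using hends
    · rw [Function.update_of_ne hne, Function.update_of_ne hne]; exact F.ends_eq i (by omega)
  injOn i hi j hj hij := by
    simp only [Set.mem_Iic] at hi hj
    rcases eq_or_ne i (p + 1) with rfl | hi'
    · rcases eq_or_ne j (p + 1) with rfl | hj'
      · rfl
      · simp only [Function.update_self, Function.update_of_ne hj'] at hij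
        exact absurd hij.symm (hnew j (by omega))
    · rcases eq_or_ne j (p + 1) with rfl | hj'
      · simp only [Function.update_self, Function.update_of_ne hi'] at hij
        exact absurd hij (hnew i (by omega))
      · rw [Function.update_of_ne hi', Function.update_of_ne hj'] at hij
        exact (F.eq_iff (by omega) (by omega)).1 hij
  missing i hi := by
    rw [Function.update_of_ne (show (0 : ℕ) ≠ p + 1 by omega),
      Function.update_of_ne (show i ≠ p + 1 by omega)]
    rcases eq_or_ne i p with rfl | hne
    · simpa using hcol
    · rw [Function.update_of_ne (show i + 1 ≠ p + 1 by omega)]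
      exact F.missing i (by omega)

theorem isProperColoringOn_shift (F : G.IsVizingFan k T c x e y (p + 1))
    (hc : G.IsProperColoringOn k (T \ {e 0}) c) :
    G.IsProperColoringOn k (T \ {e 1}) (Function.update c (e 0) (c (e 1))) := by
  refine ((hc.mono Set.sdiff_subset).insert_update fun u hu => ?_).mono
    (Set.sdiff_singleton_subset_insert_sdiff T (e 0) (e 1))
  rw [F.ends_eq 0 (by omega), Sym2.mem_iff] at hu
  rcases hu with rfl | rfl
  · exact hc.mem_missingOn_sdiff (F.mem_sdiff (by omega) one_ne_zero) (F.left_mem (by omega))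
  · exact missingOn_anti Set.sdiff_subset (F.missing 0 (by omega))

theorem shift (F : G.IsVizingFan k T c x e y (p + 1))
    (hc : G.IsProperColoringOn k (T \ {e 0}) c) :
    G.IsVizingFan k T (Function.update c (e 0) (c (e 1))) x (fun i => e (i + 1))
      (fun i => y (i + 1)) p where
  mem i hi := F.mem (i + 1) (by omega)
  ends_eq i hi := F.ends_eq (i + 1) (by omega)
  injOn i hi j hj hij := by
    simp only [Set.mem_Iic] at hi hj
    have := (F.eq_iff (i := i + 1) (j := j + 1) (by omega) (by omega)).1 hij
    omega
  missing i hi := by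
    have hi2 := F.mem_sdiff (i := i + 2) (by omega) (by omega)
    rw [Function.update_of_ne hi2.2]
    refine mem_missingOn_sdiff_update (F.missing (i + 1) (by omega)) fun _ => ?_
    refine hc.color_ne (F.mem_sdiff (by omega) one_ne_zero) hi2 ?_ (F.left_mem (by omega))
      (F.left_mem (by omega))
    rw [Ne, F.eq_iff (by omega) (by omega)]
    omega

/-- Shift each color one step down the fan (`e i` receives the color of `e (i + 1)`) and give
the last edge `e q` the color `γ`. Freshness of `γ` at `y q` is what keeps this proper. -/
theorem colorable {q : ℕ} (F : G.IsVizingFan k T c x e y q)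
    (hc : G.IsProperColoringOn k (T \ {e 0}) c) {γ : ℕ}
    (hγx : γ ∈ G.missingOn k (T \ {e 0}) c x) (hγy : γ ∈ G.missingOn k (T \ {e 0}) c (y q))
    (hfresh : ∀ i < q, y i = y q → c (e (i + 1)) ≠ γ) :
    ∃ c', G.IsProperColoringOn k T c' := by
  induction q generalizing c e y with
  | zero =>
    refine ⟨Function.update c (e 0) γ, ?_⟩
    have h := hc.insert_update (e := e 0) (γ := γ) fun u hu => by
      rw [F.ends_eq 0 le_rfl, Sym2.mem_iff] at hu
      rcases hu with rfl | rfl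
      exacts [hγx, hγy]
    rwa [Set.insert_sdiff_singleton, Set.insert_eq_of_mem (F.mem 0 le_rfl)] at h
  | succ q ih =>
    have he1 := F.mem_sdiff (i := 1) (by omega) one_ne_zero
    refine ih (F.shift hc) (F.isProperColoringOn_shift hc)
      (mem_missingOn_sdiff_update hγx fun _ => hγx.2 _ he1 (F.left_mem (by omega)))
      (mem_missingOn_sdiff_update hγy fun hy => ?_) fun i hi hyi => ?_
    · rw [F.ends_eq 0 (by omega), Sym2.mem_iff] at hy
      rcases hy with hy | hy
      · exact absurd hy.symm (F.left_ne (by omega))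
      · exact hfresh 0 (by omega) hy.symm
    · rw [Function.update_of_ne (F.mem_sdiff (i := i + 2) (by omega) (by omega)).2]
      exact hfresh (i + 1) (by omega) hyi

theorem swapOn (F : G.IsVizingFan k T c x e y p) {α β : ℕ} {K : Set G.V}
    (hα : α ∈ Set.Icc 1 k) (hβ : β ∈ Set.Icc 1 k) (hK : G.IsChainClosed (T \ {e 0}) c α β K)
    (hxK : x ∈ K) (hcol : ∀ i < p, y i ∉ K → c (e (i + 1)) ≠ α ∧ c (e (i + 1)) ≠ β) :
    G.IsVizingFan k T (G.swapOn c α β K) x e y p where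
  mem := F.mem
  ends_eq := F.ends_eq
  injOn := F.injOn
  missing i hi := by
    rw [swapOn_apply_of_mem (F.left_mem (by omega)) hxK]
    by_cases hyK : y i ∈ K
    · rw [mem_missingOn_swapOn_iff_of_mem hα hβ hyK, Equiv.swap_apply_self]
      exact F.missing i hi
    · rw [missingOn_swapOn_of_notMem hK hyK,
        Equiv.swap_apply_of_ne_of_ne (hcol i hi hyK).1 (hcol i hi hyK).2]
      exact F.missing i hi

/-- The Kempe step. The `(α,β)`-chain through `x` has `x` as an end, so it cannot also reach both
`y i` and `y p`, where `β` is missing. Swapping it makes `β` missing at `x`, and the fan up to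
whichever of `y i`, `y p` the chain misses can then be colored. -/
theorem colorable_of_color_eq (F : G.IsVizingFan k T c x e y p)
    (hc : G.IsProperColoringOn k (T \ {e 0}) c) {α β i : ℕ}
    (hα : α ∈ G.missingOn k (T \ {e 0}) c x) (hβ : β ∈ G.missingOn k (T \ {e 0}) c (y p))
    (hi : i < p) (hβi : c (e (i + 1)) = β) (hyi : y i ≠ y p) :
    ∃ c', G.IsProperColoringOn k T c' := by
  set K := {v | G.sameChain (T \ {e 0}) c α β x v}
  have hK : G.IsChainClosed (T \ {e 0}) c α β K := isChainClosed_sameChain x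
  have hxK : x ∈ K := Relation.ReflTransGen.refl
  have hβi' : β ∈ G.missingOn k (T \ {e 0}) c (y i) := hβi ▸ F.missing i hi
  have hleaves : ¬ (y i ∈ K ∧ y p ∈ K) := fun ⟨hiK, hpK⟩ =>
    false_of_three_leaves (degreeOn_kempeEdges_le_two hc) (F.left_ne hi.le) (F.left_ne le_rfl) hyi
      (degreeOn_kempeEdges_le_one hc (Or.inl hα)) (degreeOn_kempeEdges_le_one hc (Or.inr hβi'))
      (degreeOn_kempeEdges_le_one hc (Or.inr hβ)) hiK.reachable hpK.reachable
  have hcol : ∀ l < p, l ≠ i → c (e (l + 1)) ≠ α ∧ c (e (l + 1)) ≠ β := fun l hl hli =>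
    ⟨hα.2 _ (F.mem_sdiff (by omega) (by omega)) (F.left_mem (by omega)),
      hβi ▸ hc.color_ne (F.mem_sdiff (by omega) (by omega)) (F.mem_sdiff (by omega) (by omega))
        (by rw [Ne, F.eq_iff (by omega) (by omega)]; omega) (F.left_mem (by omega))
        (F.left_mem (by omega))⟩
  have hswap : ∀ q ≤ p, y q ∉ K → β ∈ G.missingOn k (T \ {e 0}) c (y q) →
      (∀ l < q, y l ∉ K → l ≠ i) → ∃ c', G.IsProperColoringOn k T c' := by
    intro q hq hyq hβq hl
    refine ((F.mono hq).swapOn hα.1 hβ.1 hK hxK fun l hlq hyl =>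
      hcol l (by omega) (hl l hlq hyl)).colorable (γ := β) (hc.swapOn hα.1 hβ.1 hK) ?_ ?_ ?_
    · rw [mem_missingOn_swapOn_iff_of_mem hα.1 hβ.1 hxK, Equiv.swap_apply_right]
      exact hα
    · rwa [missingOn_swapOn_of_notMem hK hyq]
    · intro l hl _ h
      rw [swapOn_apply_of_mem (F.left_mem (by omega)) hxK, Equiv.swap_apply_eq_iff,
        Equiv.swap_apply_right] at h
      exact hα.2 _ (F.mem_sdiff (by omega) (by omega)) (F.left_mem (by omega)) h
  by_cases hyiK : y i ∈ K
  · exact hswap p le_rfl (fun h => hleaves ⟨hyiK, h⟩) hβ fun l _ hyl h => hyl (h ▸ hyiK)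
  · exact hswap i hi.le hyiK hβi' fun l hl _ => hl.ne

theorem le_degreeOn_add_multOn (F : G.IsVizingFan k T c x e y p)
    (hsub : G.missingOn k (T \ {e 0}) c (y p) ⊆
      (fun l => c (e (l + 1))) '' {l | l < p ∧ y l = y p}) :
    k + 1 ≤ G.degreeOn (T \ {e 0}) (y p) + G.multOn T x (y p) := by
  have hfin : {l | l < p ∧ y l = y p}.Finite := (Set.finite_Iio p).subset fun _ hl => hl.1
  have hmiss : (G.missingOn k (T \ {e 0}) c (y p)).ncard ≤ {l | l < p ∧ y l = y p}.ncard :=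
    (Set.ncard_le_ncard hsub (hfin.image _)).trans (Set.ncard_image_le hfin)
  have hlast : {l | l ≤ p ∧ y l = y p} = insert p {l | l < p ∧ y l = y p} := by
    ext l
    simp only [Set.mem_insert_iff, Set.mem_ofPred_eq]
    constructor
    · rintro ⟨hl, hyl⟩
      rcases hl.lt_or_eq with hl | rfl
      exacts [Or.inr ⟨hl, hyl⟩, Or.inl rfl]
    · rintro (rfl | ⟨hl, hyl⟩)
      exacts [⟨le_rfl, rfl⟩, ⟨hl.le, hyl⟩]
  have hmult := F.ncard_le_multOn (y p)
  rw [hlast, Set.ncard_insert_of_notMem (fun h => lt_irrefl p h.1) hfin] at hmult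
  have := le_ncard_missingOn_add_degreeOn (k := k) (D := T \ {e 0}) c (y p)
  omega

end

theorem colorable_or_exists_le_degreeOn_add_multOn {e : ℕ → G.E} {y : ℕ → G.V} {p : ℕ}
    (F : G.IsVizingFan k T c x e y p) (hc : G.IsProperColoringOn k (T \ {e 0}) c) {α : ℕ}
    (hα : α ∈ G.missingOn k (T \ {e 0}) c x) :
    (∃ c', G.IsProperColoringOn k T c') ∨
      ∃ z, k + 1 ≤ G.degreeOn (T \ {e 0}) z + G.multOn T x z := by
  by_cases hsub : G.missingOn k (T \ {e 0}) c (y p) ⊆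
      (fun l => c (e (l + 1))) '' {l | l < p ∧ y l = y p}
  · exact Or.inr ⟨y p, F.le_degreeOn_add_multOn hsub⟩
  obtain ⟨β, hβ, hβU⟩ := Set.not_subset.1 hsub
  have hfresh : ∀ l < p, y l = y p → c (e (l + 1)) ≠ β :=
    fun l hl hyl h => hβU ⟨l, ⟨hl, hyl⟩, h⟩
  by_cases hβx : β ∈ G.missingOn k (T \ {e 0}) c x
  · exact Or.inl (F.colorable hc hβx hβ hfresh)
  obtain ⟨g, hg, hxg, hgβ⟩ := exists_color_eq_of_notMem_missingOn hβ.1 hβx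
  by_cases hgF : ∃ j ≤ p, e j = g
  · obtain ⟨j, hj, rfl⟩ := hgF
    obtain ⟨i, rfl⟩ : ∃ i, j = i + 1 :=
      Nat.exists_eq_succ_of_ne_zero fun h => hg.2 (by rw [h]; rfl)
    exact Or.inl (F.colorable_of_color_eq hc hα hβ (by omega) hgβ fun h =>
      hfresh i (by omega) h hgβ)
  push Not at hgF
  obtain ⟨w, -, hw⟩ := exists_ends_eq_of_mem hxg
  have F' := F.extend hg.1 hw hgF (hgβ ▸ hβ)
  have he0 : Function.update e (p + 1) g 0 = e 0 := Function.update_of_ne (by omega) _ _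
  have := F'.succ_le_degreeOn
  have IH := F'.colorable_or_exists_le_degreeOn_add_multOn (he0 ▸ hc) (he0 ▸ hα)
  rwa [he0] at IH
termination_by G.degreeOn T x - p

end IsVizingFan

end VizingFan

section Critical

variable {k : ℕ} {T : Set G.E} {c : G.E → ℕ}

theorem exists_le_degreeOn_add_multOn_of_not_colorable {e₀ : G.E} {x y : G.V} (he₀ : e₀ ∈ T)
    (hends : G.ends e₀ = s(x, y)) (hc : G.IsProperColoringOn k (T \ {e₀}) c)
    (hx : G.degreeOn T x ≤ k) (hT : ¬ ∃ c', G.IsProperColoringOn k T c') :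
    ∃ z, k + 1 ≤ G.degreeOn (T \ {e₀}) z + G.multOn T x z := by
  have F : G.IsVizingFan k T c x (fun _ => e₀) (fun _ => y) 0 :=
    ⟨fun _ _ => he₀, fun _ _ => hends, fun _ _ _ _ _ => by simp_all, fun _ hi => by omega⟩
  obtain ⟨α, hα⟩ := exists_mem_missingOn_of_degreeOn_lt c
    ((degreeOn_sdiff_lt he₀ (by simp [hends])).trans_le hx)
  exact (F.colorable_or_exists_le_degreeOn_add_multOn hc hα).resolve_left hT

theorem exists_saturated_neighbor {e₀ : G.E} {x y : G.V} (he₀ : e₀ ∈ T)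
    (hends : G.ends e₀ = s(x, y))
    (hc : G.IsProperColoringOn (G.maxDegree + G.maxMult - 1) (T \ {e₀}) c)
    (hT : ¬ ∃ c', G.IsProperColoringOn (G.maxDegree + G.maxMult - 1) T c') :
    ∃ z, G.degreeOn T z = G.degree z ∧ G.degree z = G.maxDegree ∧
      G.multOn T x z = G.maxMult ∧ G.mult x z = G.maxMult := by
  have hμ := maxMult_pos e₀
  obtain ⟨z, hz⟩ := exists_le_degreeOn_add_multOn_of_not_colorable he₀ hends hc
    (by have := degreeOn_le_degree T x; have := degree_le_maxDegree x; omega) hT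
  have := degreeOn_mono (Set.sdiff_subset : T \ {e₀} ⊆ T) z
  have := degreeOn_le_degree T z
  have := degree_le_maxDegree z
  have := multOn_le_mult T x z
  have := mult_le_maxMult x z
  exact ⟨z, by omega, by omega, by omega, by omega⟩

theorem exists_fullySaturated_of_critical
    (hT : ¬ ∃ c, G.IsProperColoringOn (G.maxDegree + G.maxMult - 1) T c)
    (hcrit : ∀ e ∈ T, ∃ c, G.IsProperColoringOn (G.maxDegree + G.maxMult - 1) (T \ {e}) c) :
    ∃ f, G.IsFullySaturated f ∧ ∀ v ∈ G.ends f, ∀ g, v ∈ G.ends g → g ∈ T := by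
  obtain ⟨e₀, he₀⟩ : T.Nonempty := Set.nonempty_iff_ne_empty.2 fun h =>
    hT ⟨fun _ => 0, by simp [h, IsProperColoringOn]⟩
  obtain ⟨x, y, -, hxy⟩ := exists_ends_eq e₀
  obtain ⟨c₀, hc₀⟩ := hcrit e₀ he₀
  obtain ⟨z₁, hz₁T, hz₁, hxz₁T, -⟩ := exists_saturated_neighbor he₀ hxy hc₀ hT
  obtain ⟨e₁, he₁T, he₁⟩ : ∃ e₁, e₁ ∈ T ∧ G.ends e₁ = s(x, z₁) :=
    (Set.ncard_pos (Set.toFinite _)).1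
      (show 0 < G.multOn T x z₁ from hxz₁T ▸ maxMult_pos e₀)
  obtain ⟨c₁, hc₁⟩ := hcrit e₁ he₁T
  obtain ⟨z₂, hz₂T, hz₂, hz₁z₂T, hz₁z₂⟩ :=
    exists_saturated_neighbor he₁T (he₁.trans Sym2.eq_swap) hc₁ hT
  obtain ⟨f, -, hf⟩ : ∃ f, f ∈ T ∧ G.ends f = s(z₁, z₂) :=
    (Set.ncard_pos (Set.toFinite _)).1
      (show 0 < G.multOn T z₁ z₂ from hz₁z₂T ▸ maxMult_pos e₀)
  refine ⟨f, ⟨z₁, z₂, hf, hz₁, hz₂, hz₁z₂⟩, fun v hv g hg => ?_⟩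
  rw [hf, Sym2.mem_iff] at hv
  rcases hv with rfl | rfl
  exacts [mem_of_degreeOn_eq_degree hz₁T hg, mem_of_degreeOn_eq_degree hz₂T hg]

end Critical

end Multigraph

theorem berge_fournier_generalized_general (G : Multigraph) (M M' : Set G.E)
    (hmax : ∀ f : G.E, G.IsFullySaturated f →
      ∃ g ∈ M ∪ M', ∃ v : G.V, v ∈ G.ends f ∧ v ∈ G.ends g) :
    G.chromIndexOn (M ∪ M')ᶜ ≤ G.maxDegree + G.maxMult - 1 := by
  set k := G.maxDegree + G.maxMult - 1
  by_contra hS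
  obtain ⟨T, hTS, hT, hmin⟩ := exists_minimal_le_of_wellFoundedLT
    (fun T => ¬ ∃ c, G.IsProperColoringOn k T c) (M ∪ M')ᶜ
    fun ⟨c, hc⟩ => hS (G.chromIndexOn_le_of_isProperColoringOn hc)
  have hcrit : ∀ e ∈ T, ∃ c, G.IsProperColoringOn k (T \ {e}) c := fun e he => by
    by_contra h
    exact (hmin h Set.sdiff_subset he).2 rfl
  obtain ⟨f, hf, hfT⟩ := G.exists_fullySaturated_of_critical hT hcrit
  obtain ⟨g, hg, v, hvf, hvg⟩ := hmax f hf
  exact hTS (hfT v hvf g hvg) hg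

/-- **Lemma 3.3 (generalized Berge–Fournier).** Let `M` and `M'` be two vertex-disjoint
matchings of `G` such that every edge of `M'` is fully `G`-saturated and `M'` is maximal
subject to this property (every fully `G`-saturated edge shares a vertex with some edge of
`M ∪ M'`). Then `χ'(G - (M ∪ M')) ≤ Δ(G) + μ(G) - 1`. -/
theorem berge_fournier_generalized (G : Multigraph) (M M' : Set G.E)
    (hM : G.IsMatching M) (hM' : G.IsMatching M')
    (hdisj : ∀ e ∈ M, ∀ f ∈ M', ∀ v : G.V, v ∈ G.ends e → v ∉ G.ends f)
    (hsat : ∀ e ∈ M', G.IsFullySaturated e)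
    (hmax : ∀ f : G.E, G.IsFullySaturated f →
      ∃ g ∈ M ∪ M', ∃ v : G.V, v ∈ G.ends f ∧ v ∈ G.ends g) :
    G.chromIndexOn (M ∪ M')ᶜ ≤ G.maxDegree + G.maxMult - 1 :=
  berge_fournier_generalized_general G M M' hmax
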